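/- The operator norm (with respect to Euclidean norms) of the duplication map f : ℝ^{n_u} → ℝ^{n_nu} of a partition g equals √(max_{x} |g(x)|). -/
import Mathlib


/-- The operator norm of the duplication map equals `√(max_x |g x|)`. -/
theorem stmt15 (nu nnu : ℕ) (hnu : 0 < nu) (hle : nu ≤ nnu)
    (g : Fin nu → Finset (Fin nnu))
    (hdisj : ∀ x y : Fin nu, x ≠ y → Disjoint (g x) (g y))
    (hcover : ∀ j : Fin nnu, ∃ x : Fin nu, j ∈ g x)
    (hne : ∀ x : Fin nu, (g x).Nonempty)
    (F : EuclideanSpace ℝ (Fin nu) →L[ℝ] EuclideanSpace ℝ (Fin nnu))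
    (hF : ∀ (θ : EuclideanSpace ℝ (Fin nu)) (x : Fin nu) (j : Fin nnu),
      j ∈ g x → F θ j = θ x) :
    ‖F‖ = Real.sqrt ((Finset.univ.sup fun x : Fin nu => (g x).card : ℕ)) := by
  haveI : Nonempty (Fin nu) := ⟨⟨0, hnu⟩⟩
  set M : ℕ := Finset.univ.sup fun x : Fin nu => (g x).card with hM
  have hunion : (Finset.univ : Finset (Fin nnu)) = Finset.univ.biUnion g := by
    ext j
    simp only [Finset.mem_biUnion, Finset.mem_univ, true_and, true_iff]
    exact hcover j
  have key : ∀ θ : EuclideanSpace ℝ (Fin nu),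
      ‖F θ‖ ^ 2 = ∑ x, ((g x).card : ℝ) * (θ x) ^ 2 := by
    intro θ
    rw [EuclideanSpace.norm_eq, Real.sq_sqrt (by positivity)]
    calc ∑ j, ‖F θ j‖ ^ 2 = ∑ x, ∑ j ∈ g x, ‖F θ j‖ ^ 2 := by
          rw [hunion, Finset.sum_biUnion]
          intro x _ y _ hxy
          exact hdisj x y hxy
      _ = ∑ x, ((g x).card : ℝ) * (θ x) ^ 2 := by
          refine Finset.sum_congr rfl fun x _ => ?_
          rw [Finset.sum_congr rfl fun j hj => by rw [hF θ x j hj]]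
          simp [Finset.sum_const, nsmul_eq_mul, Real.norm_eq_abs, sq_abs]
  have hnormsq : ∀ θ : EuclideanSpace ℝ (Fin nu),
      ‖θ‖ ^ 2 = ∑ x, (θ x) ^ 2 := by
    intro θ
    rw [EuclideanSpace.norm_eq, Real.sq_sqrt (by positivity)]
    simp [Real.norm_eq_abs, sq_abs]
  have hMle : ∀ x : Fin nu, ((g x).card : ℝ) ≤ (M : ℝ) := by
    intro x
    exact_mod_cast Finset.le_sup (f := fun x : Fin nu => (g x).card) (Finset.mem_univ x)
  refine le_antisymm ?_ ?_
  · refine F.opNorm_le_bound (Real.sqrt_nonneg _) fun θ => ?_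
    have h1 : ‖F θ‖ ^ 2 ≤ (Real.sqrt M * ‖θ‖) ^ 2 := by
      rw [key θ, mul_pow, Real.sq_sqrt (by positivity), hnormsq θ, Finset.mul_sum]
      exact Finset.sum_le_sum fun x _ => by
        have := hMle x
        nlinarith [sq_nonneg (θ x)]
    have h2 : (0:ℝ) ≤ Real.sqrt M * ‖θ‖ := by positivity
    nlinarith [norm_nonneg (F θ)]
  · obtain ⟨x₀, -, hx₀⟩ := Finset.exists_mem_eq_sup Finset.univ Finset.univ_nonempty
      (fun x : Fin nu => (g x).card)
    set θ : EuclideanSpace ℝ (Fin nu) := EuclideanSpace.single x₀ 1 with hθ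
    have hθnorm : ‖θ‖ = 1 := by simp [hθ, EuclideanSpace.norm_single]
    have hFθ : ‖F θ‖ ^ 2 = (M : ℝ) := by
      rw [key θ]
      have : ∀ x : Fin nu, ((g x).card : ℝ) * (θ x) ^ 2 =
          if x = x₀ then ((g x₀).card : ℝ) else 0 := by
        intro x
        by_cases h : x = x₀ <;>
          simp [hθ, EuclideanSpace.single_apply, h]
      rw [Finset.sum_congr rfl fun x _ => this x]
      simp [hM, ← hx₀]
    have hFθ' : ‖F θ‖ = Real.sqrt M := by
      rw [← hFθ, Real.sqrt_sq (norm_nonneg _)]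
    calc Real.sqrt M = ‖F θ‖ := hFθ'.symm
      _ ≤ ‖F‖ * ‖θ‖ := F.le_opNorm θ
      _ = ‖F‖ := by rw [hθnorm, mul_one]
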